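/- Fix ε ∈ (0, 1/2], an integer m ≥ 1, d ∈ [0,1], α > 0, and δ₁, δ₂ ∈ (0,1). Write t = tanh(ε/2). Let X_1, …, X_m be i.i.d. Bernoulli(d); conditionally on X, let b_1, …, b_m be independent with b_i ~ Bernoulli((1/2)(1 − t) + t·X_i); let L be an independent real random variable with Laplace(0, 1/(εm)) distribution; and define d̃ = (1/t)·((1/m)·Σ_{i=1}^m b_i − (1/2)(1 − t)) + L. Then P(|d̃ − d| ≥ α) ≤ 2·exp(−2mα²(1−δ₁)²) + 2·exp(−2m·t²·α²δ₁²(1−δ₂)²) + exp(−εmαδ₁δ₂). -/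

import Mathlib

/-!
Write `Y₁ᵢ = Xᵢ − d` and `Y₂ᵢ = bᵢ − ((1 − t)/2 + t·Xᵢ)`. Then
`d̃ − d = (1/m)·∑ Y₁ᵢ + (1/(tm))·∑ Y₂ᵢ + L`, and splitting
`α = α(1 − δ₁) + αδ₁(1 − δ₂) + αδ₁δ₂` a union bound reduces the claim to three tail bounds.
Each family `Y₁ᵢ`, `Y₂ᵢ` is independent and `1/4`-sub-Gaussian by Hoeffding's lemma (for `Y₂ᵢ`
applied conditionally on `Xᵢ`, where `bᵢ` is Bernoulli), so Hoeffding's inequality gives the first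
two terms; the third is the exact Laplace tail `P(|L| ≥ c) = exp(−c/b)`.
-/

open MeasureTheory ProbabilityTheory

/-- The law of a `Laplace(0, b)` random variable: the measure on `ℝ` with density
`x ↦ (1/(2b))·exp(−|x|/b)` with respect to Lebesgue measure. -/
noncomputable def laplaceMeasure (b : ℝ) : Measure ℝ :=
  volume.withDensity fun x => ENNReal.ofReal (1 / (2 * b) * Real.exp (-|x| / b))

open Real Set
open scoped NNReal

lemma Real.tanh_pos {x : ℝ} (hx : 0 < x) : 0 < tanh x := by
  rw [tanh_eq_sinh_div_cosh]
  exact div_pos (sinh_pos_iff.2 hx) (cosh_pos x)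

lemma bernoulli_mgf_centered_le {p : ℝ} (hp : p ∈ Icc 0 1) (l : ℝ) :
    p * exp (l * (1 - p)) + (1 - p) * exp (l * (0 - p)) ≤ exp (l ^ 2 / 8) := by
  let q : unitInterval := ⟨p, hp⟩
  have hmem : ∀ᵐ x ∂Ber((1 : ℝ), 0, q), x ∈ Icc (0 : ℝ) 1 :=
    ae_iff.2 (bernoulliMeasure_apply_of_notMem_of_notMem q measurableSet_Icc.compl
      (by simp) (by simp))
  have h := (hasSubgaussianMGF_of_mem_Icc measurable_id.aemeasurable hmem).mgf_le l
  simp only [mgf, integral_bernoulliMeasure, id, smul_eq_mul] at h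
  convert h using 2 <;> norm_num [q]
  ring

lemma laplaceMeasure_abs_ge {b c : ℝ} (hb : 0 < b) (hc : 0 < c) :
    laplaceMeasure b {x | c ≤ |x|} = ENNReal.ofReal (exp (-c / b)) := by
  have hS : {x : ℝ | c ≤ |x|} = Iic (-c) ∪ Ici c := by
    ext x
    simp only [mem_ofPred_eq, mem_union, mem_Iic, mem_Ici, le_abs, le_neg, or_comm]
  have hlow : ∫⁻ x in Iic (-c), ENNReal.ofReal (1 / (2 * b) * exp (-|x| / b)) =
      ENNReal.ofReal (exp (-c / b) / 2) := by
    rw [setLIntegral_congr_fun measurableSet_Iic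
        (g := fun x => ENNReal.ofReal (1 / (2 * b) * exp (b⁻¹ * x)))
        fun x hx => by rw [abs_of_neg (by linarith [mem_Iic.1 hx])]; ring_nf,
      ← ofReal_integral_eq_lintegral_ofReal
        ((integrableOn_exp_mul_Iic (inv_pos.2 hb) _).const_mul _)
        (ae_of_all _ fun x => by positivity),
      integral_const_mul, integral_exp_mul_Iic (inv_pos.2 hb)]
    field_simp
  have hup : ∫⁻ x in Ici c, ENNReal.ofReal (1 / (2 * b) * exp (-|x| / b)) =
      ENNReal.ofReal (exp (-c / b) / 2) := by
    rw [setLIntegral_congr_fun measurableSet_Ici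
        (g := fun x => ENNReal.ofReal (1 / (2 * b) * exp (-b⁻¹ * x)))
        fun x hx => by rw [abs_of_pos (by linarith [mem_Ici.1 hx])]; ring_nf,
      setLIntegral_congr Ioi_ae_eq_Ici.symm,
      ← ofReal_integral_eq_lintegral_ofReal
        ((integrableOn_exp_mul_Ioi (neg_lt_zero.2 (inv_pos.2 hb)) _).const_mul _)
        (ae_of_all _ fun x => by positivity),
      integral_const_mul, integral_exp_mul_Ioi (neg_lt_zero.2 (inv_pos.2 hb))]
    field_simp
  rw [laplaceMeasure, withDensity_apply _ (hS ▸ measurableSet_Iic.union measurableSet_Ici), hS,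
    lintegral_union measurableSet_Ici (Iic_disjoint_Ici.2 (by linarith)), hlow, hup,
    ← ENNReal.ofReal_add (by positivity) (by positivity), add_halves]

section

variable {Ω : Type*} [MeasurableSpace Ω] {P : Measure Ω}

section BernoulliMixture

variable {X B : Ω → ℝ}

lemma measurableSet_eq_and_eq (hX : Measurable X) (hB : Measurable B) (u v : ℝ) :
    MeasurableSet {ω | X ω = u ∧ B ω = v} :=
  (hX (measurableSet_singleton u)).inter (hB (measurableSet_singleton v))

lemma integral_comp_eq_sum_atoms [IsFiniteMeasure P] (hX : Measurable X) (hB : Measurable B)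
    (hX01 : ∀ ω, X ω = 0 ∨ X ω = 1) (hB01 : ∀ ω, B ω = 0 ∨ B ω = 1) (g : ℝ → ℝ → ℝ) :
    ∫ ω, g (X ω) (B ω) ∂P = ∑ u ∈ ({0, 1} : Finset ℝ), ∑ v ∈ ({0, 1} : Finset ℝ),
      g u v * P.real {ω | X ω = u ∧ B ω = v} := by
  have hint (u v : ℝ) : Integrable ({ω | X ω = u ∧ B ω = v}.indicator fun _ => g u v) P :=
    (integrable_const _).indicator (measurableSet_eq_and_eq hX hB u v)
  have hpt (ω : Ω) : g (X ω) (B ω) = ∑ u ∈ ({0, 1} : Finset ℝ), ∑ v ∈ ({0, 1} : Finset ℝ),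
      {ω | X ω = u ∧ B ω = v}.indicator (fun _ => g u v) ω := by
    rcases hX01 ω with hx | hx <;> rcases hB01 ω with hb | hb <;>
      simp [hx, hb, Set.indicator_apply]
  simp_rw [hpt]
  rw [integral_finsetSum _ fun u _ => integrable_finsetSum _ fun v _ => hint u v]
  refine Finset.sum_congr rfl fun u _ => ?_
  rw [integral_finsetSum _ fun v _ => hint u v]
  refine Finset.sum_congr rfl fun v _ => ?_
  rw [integral_indicator_const _ (measurableSet_eq_and_eq hX hB u v), smul_eq_mul, mul_comm]

lemma integral_comp_eq_bernoulli_mixture [IsProbabilityMeasure P] (hX : Measurable X)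
    (hB : Measurable B) (hX01 : ∀ ω, X ω = 0 ∨ X ω = 1) (hB01 : ∀ ω, B ω = 0 ∨ B ω = 1)
    {d p₀ p₁ : ℝ} (hX1 : P.real {ω | X ω = 1} = d) (h11 : P.real {ω | X ω = 1 ∧ B ω = 1} = d * p₁)
    (h01 : P.real {ω | X ω = 0 ∧ B ω = 1} = (1 - d) * p₀) (g : ℝ → ℝ → ℝ) :
    ∫ ω, g (X ω) (B ω) ∂P =
      d * (p₁ * g 1 1 + (1 - p₁) * g 1 0) + (1 - d) * (p₀ * g 0 1 + (1 - p₀) * g 0 0) := by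
  have hsplit (u : ℝ) : P.real {ω | X ω = u ∧ B ω = 1} + P.real {ω | X ω = u ∧ B ω = 0} =
      P.real {ω | X ω = u} := by
    rw [← measureReal_union _ (measurableSet_eq_and_eq hX hB u 0)]
    · congr 1; ext ω; rcases hB01 ω with h | h <;> simp [h]
    · exact Set.disjoint_left.2 fun ω h h' => by simp_all
  have hX0 : P.real {ω | X ω = 0} = 1 - d := by
    have : {ω | X ω = 0} = {ω | X ω = 1}ᶜ := by
      ext ω; rcases hX01 ω with h | h <;> simp [h]
    rw [this, measureReal_compl (s := {ω | X ω = 1}) (hX (measurableSet_singleton 1)),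
      probReal_univ, hX1]
  have h10 : P.real {ω | X ω = 1 ∧ B ω = 0} = d * (1 - p₁) := by linarith [hsplit 1]
  have h00 : P.real {ω | X ω = 0 ∧ B ω = 0} = (1 - d) * (1 - p₀) := by linarith [hsplit 0]
  rw [integral_comp_eq_sum_atoms hX hB hX01 hB01, Finset.sum_pair zero_ne_one,
    Finset.sum_pair zero_ne_one, Finset.sum_pair zero_ne_one, h11, h10, h01, h00]
  ring

lemma hasSubgaussianMGF_sub_of_zero_or_one [IsProbabilityMeasure P] (hX : Measurable X)
    (hX01 : ∀ ω, X ω = 0 ∨ X ω = 1) {d : ℝ} (hX1 : P.real {ω | X ω = 1} = d) :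
    HasSubgaussianMGF (fun ω => X ω - d) 4⁻¹ P := by
  have hmean : P[X] = d := by
    have hind : X = {ω | X ω = 1}.indicator 1 :=
      funext fun ω => by rcases hX01 ω with h | h <;> simp [h]
    rw [hind, integral_indicator_one (s := {ω | X ω = 1}) (hX (measurableSet_singleton 1)), hX1]
  have h := hasSubgaussianMGF_of_mem_Icc (μ := P) (a := 0) (b := 1) hX.aemeasurable
    (ae_of_all _ fun ω => by rcases hX01 ω with h | h <;> simp [h])
  rw [hmean] at h
  convert h
  norm_num

lemma hasSubgaussianMGF_sub_of_bernoulli_mixture [IsProbabilityMeasure P] (hX : Measurable X)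
    (hB : Measurable B) (hX01 : ∀ ω, X ω = 0 ∨ X ω = 1) (hB01 : ∀ ω, B ω = 0 ∨ B ω = 1)
    {d p₀ p₁ : ℝ} (hd : d ∈ Icc 0 1) (hp₀ : p₀ ∈ Icc 0 1) (hp₁ : p₁ ∈ Icc 0 1)
    (hX1 : P.real {ω | X ω = 1} = d) (h11 : P.real {ω | X ω = 1 ∧ B ω = 1} = d * p₁)
    (h01 : P.real {ω | X ω = 0 ∧ B ω = 1} = (1 - d) * p₀) :
    HasSubgaussianMGF (fun ω => B ω - (p₀ + (p₁ - p₀) * X ω)) 4⁻¹ P where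
  integrable_exp_mul l := integrable_exp_mul_of_mem_Icc (a := -1) (b := 1) (by fun_prop)
    (ae_of_all _ fun ω => by
      rcases hX01 ω with hx | hx <;> rcases hB01 ω with hb | hb <;>
        simp only [hx, hb, mem_Icc] <;> constructor <;> linarith [hp₀.1, hp₀.2, hp₁.1, hp₁.2])
  mgf_le l := by
    -- `B - (p₀ + (p₁ - p₀) * X)` ranges over an interval of length `1 + |p₁ - p₀|`, too long for
    -- Hoeffding's lemma; it is applied to each Bernoulli component of the mixture instead
    rw [mgf, integral_comp_eq_bernoulli_mixture hX hB hX01 hB01 hX1 h11 h01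
      fun x y => exp (l * (y - (p₀ + (p₁ - p₀) * x)))]
    have hd₀ : 0 ≤ d := hd.1
    have hd₁ : 0 ≤ 1 - d := sub_nonneg.2 hd.2
    calc _ = d * (p₁ * exp (l * (1 - p₁)) + (1 - p₁) * exp (l * (0 - p₁))) +
          (1 - d) * (p₀ * exp (l * (1 - p₀)) + (1 - p₀) * exp (l * (0 - p₀))) := by ring_nf
      _ ≤ d * exp (l ^ 2 / 8) + (1 - d) * exp (l ^ 2 / 8) := by
        gcongr
        exacts [bernoulli_mgf_centered_le hp₁ l, bernoulli_mgf_centered_le hp₀ l]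
      _ = exp ((4⁻¹ : ℝ≥0) * l ^ 2 / 2) := by push_cast; ring_nf

end BernoulliMixture

lemma ProbabilityTheory.HasSubgaussianMGF.measureReal_abs_ge_le [IsFiniteMeasure P] {X : Ω → ℝ}
    {c : ℝ≥0} (h : HasSubgaussianMGF X c P) {ε : ℝ} (hε : 0 ≤ ε) :
    P.real {ω | ε ≤ |X ω|} ≤ 2 * exp (-ε ^ 2 / (2 * c)) :=
  calc P.real {ω | ε ≤ |X ω|} ≤ P.real ({ω | ε ≤ X ω} ∪ {ω | ε ≤ (-X) ω}) :=
        measureReal_mono fun ω (hω : ε ≤ |X ω|) => le_abs.1 hω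
    _ ≤ exp (-ε ^ 2 / (2 * c)) + exp (-ε ^ 2 / (2 * c)) :=
        (measureReal_union_le _ _).trans (add_le_add (h.measure_ge_le hε) (h.neg.measure_ge_le hε))
    _ = 2 * exp (-ε ^ 2 / (2 * c)) := by ring

lemma measureReal_abs_const_mul_sum_ge_le [IsFiniteMeasure P] {ι : Type*} [Fintype ι]
    {Y : ι → Ω → ℝ} (h_indep : iIndepFun Y P) {c : ℝ≥0} (hY : ∀ i, HasSubgaussianMGF (Y i) c P)
    {r ε : ℝ} (hr : 0 < r) (hε : 0 ≤ ε) :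
    P.real {ω | ε ≤ |r * ∑ i, Y i ω|} ≤
      2 * exp (-ε ^ 2 / (2 * r ^ 2 * Fintype.card ι * c)) := by
  have hset : {ω | ε ≤ |r * ∑ i, Y i ω|} = {ω | ε / r ≤ |∑ i, Y i ω|} := by
    ext ω
    rw [mem_ofPred_eq, mem_ofPred_eq, abs_mul, abs_of_pos hr, div_le_iff₀' hr]
  rw [hset]
  refine ((HasSubgaussianMGF.sum_of_iIndepFun h_indep fun i _ => hY i).measureReal_abs_ge_le
    (by positivity)).trans_eq ?_
  push_cast [Finset.sum_const, Finset.card_univ, nsmul_eq_mul]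
  field_simp

lemma measureReal_abs_add_add_ge_le [IsFiniteMeasure P] {f g h : Ω → ℝ} {a b c α : ℝ}
    (hα : a + b + c ≤ α) :
    P.real {ω | α ≤ |f ω + g ω + h ω|} ≤
      P.real {ω | a ≤ |f ω|} + P.real {ω | b ≤ |g ω|} + P.real {ω | c ≤ |h ω|} := by
  have hsub : {ω | α ≤ |f ω + g ω + h ω|} ⊆
      ({ω | a ≤ |f ω|} ∪ {ω | b ≤ |g ω|}) ∪ {ω | c ≤ |h ω|} := by
    intro ω hω
    by_contra hn
    simp only [mem_union, mem_ofPred_eq, not_or, not_le] at hω hn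
    linarith [abs_add_three (f ω) (g ω) (h ω)]
  calc _ ≤ P.real (({ω | a ≤ |f ω|} ∪ {ω | b ≤ |g ω|}) ∪ {ω | c ≤ |h ω|}) :=
        measureReal_mono hsub
    _ ≤ _ := (measureReal_union_le _ _).trans (add_le_add_left (measureReal_union_le _ _) _)

lemma measureReal_abs_ge_of_map_eq_laplaceMeasure {L : Ω → ℝ} (hL : Measurable L) {b c : ℝ}
    (hlaw : P.map L = laplaceMeasure b) (hb : 0 < b) (hc : 0 < c) :
    P.real {ω | c ≤ |L ω|} = exp (-c / b) := by
  rw [show {ω | c ≤ |L ω|} = L ⁻¹' {x | c ≤ |x|} from rfl,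
    ← map_measureReal_apply hL (measurableSet_le measurable_const measurable_abs), hlaw,
    measureReal_def, laplaceMeasure_abs_ge hb hc, ENNReal.toReal_ofReal (exp_pos _).le]

end

lemma estimator_sub_eq {m : ℕ} (hm : m ≠ 0) {t : ℝ} (ht : t ≠ 0) (x b : Fin m → ℝ) (ℓ d : ℝ) :
    (1 / t) * ((1 / (m : ℝ)) * ∑ i, b i - (1 / 2) * (1 - t)) + ℓ - d =
      1 / m * ∑ i, (x i - d) + 1 / (t * m) * ∑ i, (b i - ((1 / 2) * (1 - t) + t * x i)) + ℓ := by
  simp only [Finset.sum_sub_distrib, Finset.sum_add_distrib, ← Finset.mul_sum, Finset.sum_const,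
    Finset.card_univ, Fintype.card_fin, nsmul_eq_mul]
  field_simp
  ring

theorem stmt_12_general {Ω : Type*} [MeasurableSpace Ω] (P : Measure Ω) [IsProbabilityMeasure P]
    (ε : ℝ) (hε0 : 0 < ε) (m : ℕ) (hm : 1 ≤ m) (d : ℝ)
    (hd : d ∈ Set.Icc (0 : ℝ) 1) (α : ℝ) (hα : 0 < α)
    (δ₁ δ₂ : ℝ) (hδ₁ : δ₁ ∈ Set.Ioo (0 : ℝ) 1) (hδ₂ : δ₂ ∈ Set.Ioo (0 : ℝ) 1)
    (t : ℝ) (ht : t = Real.tanh (ε / 2))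
    (X b : Fin m → Ω → ℝ) (L : Ω → ℝ)
    (hXmeas : ∀ i, Measurable (X i)) (hbmeas : ∀ i, Measurable (b i))
    (hLmeas : Measurable L)
    (hX01 : ∀ i ω, X i ω = 0 ∨ X i ω = 1)
    (hb01 : ∀ i ω, b i ω = 0 ∨ b i ω = 1)
    -- marginal law of `X i`: Bernoulli(d)
    (hXdist : ∀ i, P {ω | X i ω = 1} = ENNReal.ofReal d)
    -- conditionally on `X i`, `b i` is Bernoulli((1/2)(1 − t) + t·X i)
    (hjoint1 : ∀ i, P {ω | X i ω = 1 ∧ b i ω = 1} =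
      ENNReal.ofReal (d * ((1 / 2) * (1 + t))))
    (hjoint0 : ∀ i, P {ω | X i ω = 0 ∧ b i ω = 1} =
      ENNReal.ofReal ((1 - d) * ((1 / 2) * (1 - t))))
    -- the pairs `(X i, b i)` are independent across `i`
    (hpairindep : iIndepFun
      (fun i ω => (X i ω, b i ω)) P)
    (hLlaw : Measure.map L P = laplaceMeasure (1 / (ε * m))) :
    P {ω | α ≤ |((1 / t) * ((1 / (m : ℝ)) * ∑ i, b i ω - (1 / 2) * (1 - t)) + L ω) - d|} ≤
      ENNReal.ofReal
        (2 * Real.exp (-2 * m * α ^ 2 * (1 - δ₁) ^ 2) +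
         2 * Real.exp (-2 * m * t ^ 2 * α ^ 2 * δ₁ ^ 2 * (1 - δ₂) ^ 2) +
         Real.exp (-(ε * m * α * δ₁ * δ₂))) := by
  obtain ⟨hδ₁0, hδ₁1⟩ := hδ₁
  obtain ⟨hδ₂0, hδ₂1⟩ := hδ₂
  have ht0 : 0 < t := ht ▸ tanh_pos (by positivity)
  have ht1 : t < 1 := ht ▸ tanh_lt_one _
  have real_eq {s : Set Ω} {r : ℝ} (hr : 0 ≤ r) (h : P s = ENNReal.ofReal r) : P.real s = r := by
    rw [measureReal_def, h, ENNReal.toReal_ofReal hr]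
  have hY₁ (i : Fin m) : HasSubgaussianMGF (fun ω => X i ω - d) 4⁻¹ P :=
    hasSubgaussianMGF_sub_of_zero_or_one (hXmeas i) (hX01 i) (real_eq hd.1 (hXdist i))
  have hY₂ (i : Fin m) :
      HasSubgaussianMGF (fun ω => b i ω - ((1 / 2) * (1 - t) + t * X i ω)) 4⁻¹ P := by
    convert hasSubgaussianMGF_sub_of_bernoulli_mixture (hXmeas i) (hbmeas i) (hX01 i) (hb01 i) hd
      (p₀ := (1 / 2) * (1 - t)) (p₁ := (1 / 2) * (1 + t)) ⟨by linarith, by linarith⟩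
      ⟨by linarith, by linarith⟩ (real_eq hd.1 (hXdist i))
      (real_eq (mul_nonneg hd.1 (by linarith)) (hjoint1 i))
      (real_eq (mul_nonneg (sub_nonneg.2 hd.2) (by linarith)) (hjoint0 i)) using 4
    ring
  rw [ENNReal.le_ofReal_iff_toReal_le (measure_ne_top _ _) (by positivity), ← measureReal_def]
  simp only [fun ω => estimator_sub_eq (by omega) ht0.ne' (X · ω) (b · ω) (L ω) d]
  refine (measureReal_abs_add_add_ge_le (a := α * (1 - δ₁)) (b := α * δ₁ * (1 - δ₂))
    (c := α * δ₁ * δ₂) (by linarith)).trans (add_le_add (add_le_add ?_ ?_) ?_)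
  · refine (measureReal_abs_const_mul_sum_ge_le
      (hpairindep.comp (fun _ p => p.1 - d) fun _ => by fun_prop) hY₁ (r := 1 / m)
      (by positivity) (mul_pos (by positivity) (by linarith)).le).trans_eq ?_
    push_cast [Fintype.card_fin]
    field_simp
    ring_nf
  · refine (measureReal_abs_const_mul_sum_ge_le
      (hpairindep.comp (fun _ p => p.2 - ((1 / 2) * (1 - t) + t * p.1)) fun _ => by fun_prop) hY₂
      (r := 1 / (t * m)) (by positivity) (mul_pos (by positivity) (by linarith)).le).trans_eq ?_
    push_cast [Fintype.card_fin]
    field_simp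
    ring_nf
  · refine le_of_eq ?_
    rw [measureReal_abs_ge_of_map_eq_laplaceMeasure hLmeas hLlaw (by positivity) (by positivity)]
    field_simp

/-- Accuracy of the improved pan-private density estimator (OptBern): with
`t = tanh(ε/2)`, `X_i` i.i.d. `Bernoulli(d)`, `b_i` conditionally
`Bernoulli((1/2)(1 − t) + t·X_i)` given `X`, `L` an independent `Laplace(0, 1/(εm))`
random variable, and `d̃ = (1/t)((1/m)∑ b_i − (1/2)(1 − t)) + L`,
`P(|d̃ − d| ≥ α) ≤ 2e^{−2mα²(1−δ₁)²} + 2e^{−2mt²α²δ₁²(1−δ₂)²} + e^{−εmαδ₁δ₂}`. -/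
theorem stmt_12 {Ω : Type*} [MeasurableSpace Ω] (P : Measure Ω) [IsProbabilityMeasure P]
    (ε : ℝ) (hε0 : 0 < ε) (hε1 : ε ≤ 1 / 2) (m : ℕ) (hm : 1 ≤ m) (d : ℝ)
    (hd : d ∈ Set.Icc (0 : ℝ) 1) (α : ℝ) (hα : 0 < α)
    (δ₁ δ₂ : ℝ) (hδ₁ : δ₁ ∈ Set.Ioo (0 : ℝ) 1) (hδ₂ : δ₂ ∈ Set.Ioo (0 : ℝ) 1)
    (t : ℝ) (ht : t = Real.tanh (ε / 2))
    (X b : Fin m → Ω → ℝ) (L : Ω → ℝ)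
    (hXmeas : ∀ i, Measurable (X i)) (hbmeas : ∀ i, Measurable (b i))
    (hLmeas : Measurable L)
    (hX01 : ∀ i ω, X i ω = 0 ∨ X i ω = 1)
    (hb01 : ∀ i ω, b i ω = 0 ∨ b i ω = 1)
    -- marginal law of `X i`: Bernoulli(d)
    (hXdist : ∀ i, P {ω | X i ω = 1} = ENNReal.ofReal d)
    -- conditionally on `X i`, `b i` is Bernoulli((1/2)(1 − t) + t·X i)
    (hjoint1 : ∀ i, P {ω | X i ω = 1 ∧ b i ω = 1} =
      ENNReal.ofReal (d * ((1 / 2) * (1 + t))))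
    (hjoint0 : ∀ i, P {ω | X i ω = 0 ∧ b i ω = 1} =
      ENNReal.ofReal ((1 - d) * ((1 / 2) * (1 - t))))
    -- the pairs `(X i, b i)` are independent across `i`
    (hpairindep : iIndepFun
      (fun i ω => (X i ω, b i ω)) P)
    -- `L` is independent of all the pairs
    (hLindep : IndepFun L (fun ω => fun i => (X i ω, b i ω)) P)
    (hLlaw : Measure.map L P = laplaceMeasure (1 / (ε * m))) :
    P {ω | α ≤ |((1 / t) * ((1 / (m : ℝ)) * ∑ i, b i ω - (1 / 2) * (1 - t)) + L ω) - d|} ≤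
      ENNReal.ofReal
        (2 * Real.exp (-2 * m * α ^ 2 * (1 - δ₁) ^ 2) +
         2 * Real.exp (-2 * m * t ^ 2 * α ^ 2 * δ₁ ^ 2 * (1 - δ₂) ^ 2) +
         Real.exp (-(ε * m * α * δ₁ * δ₂))) :=
  stmt_12_general P ε hε0 m hm d hd α hα δ₁ δ₂ hδ₁ hδ₂ t ht X b L hXmeas hbmeas hLmeas hX01 hb01
    hXdist hjoint1 hjoint0 hpairindep hLlaw
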